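/- Let a finite discounted MDP be given with state space S, action space A, transition kernel T, reward function r : S × A → [0,1], and discount factor γ ∈ (0,1). Let π^E and π be deterministic policies. Then for every start state s ∈ S, the imitation gap satisfies V^{π^E}(s) − V^π(s) ≤ (1/(1−γ)²) · Σ_{s'∈S} d_s^{π^E}(s') · 𝟙[π(s') ≠ π^E(s')], where d_s^{π^E}(s') = (1−γ) Σ_{t=0}^∞ γ^t (P_{π^E}^t)_{s,s'} is the normalized discounted state-visitation distribution of π^E from s. -/

import Mathlib

/-!
Performance-difference argument. For a stochastic matrix `P` and `0 ≤ γ < 1` the discounted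
occupancy `D = ∑ₜ γᵗ Pᵗ` is `(1 - γ P)⁻¹`, has nonnegative entries, and `(1 - γ) D_s` is the
visitation distribution `d_s`. With `P = P_{πE}` and the one-step advantage
`c = r_{πE} - (1 - γ P) V^π`, this gives `V^{πE} - V^π = D c`. Where `π` and `πE` agree, `c`
vanishes by the Bellman equation of `π`; elsewhere `c ≤ 1 + γ/(1-γ) = 1/(1-γ)` because
`0 ≤ V^π ≤ 1/(1-γ)`. Hence `V^{πE} - V^π ≤ (1-γ)⁻¹ D 𝟙[π ≠ πE]`.
-/

open scoped BigOperators

/-- The row-stochastic matrix induced by a deterministic policy `π` on a transition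
kernel `T`: `(P_π)_{s,s'} = T(s'|s,π(s))`. -/
noncomputable def polMatrix {S A : Type*} [Fintype S]
    (T : S → A → S → ℝ) (π : S → A) : Matrix S S ℝ :=
  fun s s' => T s (π s) s'

/-- The value function of a deterministic policy `π`:
`V^π(s) = Σ_{t=0}^∞ γ^t Σ_{s'} (P_π^t)_{s,s'} r(s',π(s'))`. -/
noncomputable def valueFn {S A : Type*} [Fintype S] [DecidableEq S]
    (T : S → A → S → ℝ) (r : S → A → ℝ) (γ : ℝ) (π : S → A) (s : S) : ℝ :=
  ∑' t : ℕ, γ ^ t * ∑ s', (polMatrix T π ^ t) s s' * r s' (π s')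

open Matrix

section OrderedSemiring

variable {m n R : Type*} [Fintype n] [Semiring R] [PartialOrder R] [IsOrderedRing R]

lemma mulVec_mono_of_nonneg {M : Matrix m n R} (hM : ∀ i j, 0 ≤ M i j) {x y : n → R}
    (hxy : x ≤ y) : M *ᵥ x ≤ M *ᵥ y :=
  fun i => dotProduct_le_dotProduct_of_nonneg_left hxy (hM i)

lemma mulVec_le_of_mem_rowStochastic [DecidableEq n] {M : Matrix n n R}
    (hM : M ∈ rowStochastic R n) {x : n → R} {c : R} (hx : ∀ i, x i ≤ c) (i : n) :
    (M *ᵥ x) i ≤ c := by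
  calc (M *ᵥ x) i ≤ (M *ᵥ fun _ => c) i :=
        mulVec_mono_of_nonneg (fun _ _ => nonneg_of_mem_rowStochastic hM) hx i
    _ = c := by
        rw [mulVec, dotProduct, ← Finset.sum_mul, sum_row_of_mem_rowStochastic hM, one_mul]

end OrderedSemiring

section DiscountedOccupancy

variable {S : Type*} [Fintype S] [DecidableEq S] {P : Matrix S S ℝ} {γ : ℝ}

variable (P γ) in
noncomputable def discountedOccupancy : Matrix S S ℝ :=
  ∑' t : ℕ, γ ^ t • P ^ t

lemma summable_pow_smul_pow (hP : P ∈ rowStochastic ℝ S) (hγ0 : 0 ≤ γ) (hγ1 : γ < 1) :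
    Summable fun t : ℕ => γ ^ t • P ^ t := by
  refine Pi.summable.2 fun i => Pi.summable.2 fun j => ?_
  have hPt (t : ℕ) := pow_mem hP t
  refine (summable_geometric_of_lt_one hγ0 hγ1).of_nonneg_of_le (fun t => ?_) (fun t => ?_)
  · exact mul_nonneg (pow_nonneg hγ0 t) (nonneg_of_mem_rowStochastic (hPt t))
  · exact mul_le_of_le_one_right (pow_nonneg hγ0 t) (le_one_of_mem_rowStochastic (hPt t))

lemma discountedOccupancy_apply (hP : P ∈ rowStochastic ℝ S) (hγ0 : 0 ≤ γ) (hγ1 : γ < 1)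
    (i j : S) : discountedOccupancy P γ i j = ∑' t : ℕ, γ ^ t * (P ^ t) i j := by
  have hs := summable_pow_smul_pow hP hγ0 hγ1
  exact (congrFun (tsum_apply hs) j).trans (tsum_apply (Pi.summable.1 hs i))

lemma discountedOccupancy_nonneg (hP : P ∈ rowStochastic ℝ S) (hγ0 : 0 ≤ γ) (hγ1 : γ < 1)
    (i j : S) : 0 ≤ discountedOccupancy P γ i j := by
  rw [discountedOccupancy_apply hP hγ0 hγ1]
  exact tsum_nonneg fun t =>
    mul_nonneg (pow_nonneg hγ0 t) (nonneg_of_mem_rowStochastic (pow_mem hP t))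

lemma discountedOccupancy_mul_one_sub_smul (hP : P ∈ rowStochastic ℝ S) (hγ0 : 0 ≤ γ)
    (hγ1 : γ < 1) : discountedOccupancy P γ * (1 - γ • P) = 1 := by
  have hs := summable_pow_smul_pow hP hγ0 hγ1
  have hshift : discountedOccupancy P γ = 1 + discountedOccupancy P γ * (γ • P) := by
    rw [discountedOccupancy, ← hs.tsum_mul_right, hs.tsum_eq_zero_add]
    simp only [pow_zero, one_smul, pow_succ, smul_mul_smul_comm]
  rw [mul_sub, mul_one, sub_eq_iff_eq_add]
  exact hshift

lemma one_sub_smul_mul_discountedOccupancy (hP : P ∈ rowStochastic ℝ S) (hγ0 : 0 ≤ γ)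
    (hγ1 : γ < 1) : (1 - γ • P) * discountedOccupancy P γ = 1 :=
  mul_eq_one_comm.mp (discountedOccupancy_mul_one_sub_smul hP hγ0 hγ1)

lemma discountedOccupancy_mulVec_one (hP : P ∈ rowStochastic ℝ S) (hγ0 : 0 ≤ γ)
    (hγ1 : γ < 1) : discountedOccupancy P γ *ᵥ 1 = (1 - γ)⁻¹ • 1 := by
  have h1 : (1 - γ • P) *ᵥ 1 = (1 - γ) • (1 : S → ℝ) := by
    rw [sub_mulVec, smul_mulVec, one_vecMul_of_mem_rowStochastic hP, one_mulVec, sub_smul,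
      one_smul]
  have h := congrArg (discountedOccupancy P γ *ᵥ ·) h1
  simp only [mulVec_mulVec, discountedOccupancy_mul_one_sub_smul hP hγ0 hγ1, one_mulVec,
    mulVec_smul] at h
  exact (eq_inv_smul_iff₀ (sub_ne_zero.2 hγ1.ne')).2 h.symm

lemma discountedOccupancy_mulVec_sub (hP : P ∈ rowStochastic ℝ S) (hγ0 : 0 ≤ γ)
    (hγ1 : γ < 1) (g u : S → ℝ) :
    discountedOccupancy P γ *ᵥ (g - (1 - γ • P) *ᵥ u) = discountedOccupancy P γ *ᵥ g - u := by
  rw [mulVec_sub, mulVec_mulVec, discountedOccupancy_mul_one_sub_smul hP hγ0 hγ1, one_mulVec]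

end DiscountedOccupancy

section MDP

variable {S A : Type*} [Fintype S] [DecidableEq S] {T : S → A → S → ℝ} {r : S → A → ℝ} {γ : ℝ}

lemma polMatrix_mem_rowStochastic (hT0 : ∀ s a s', 0 ≤ T s a s')
    (hT1 : ∀ s a, ∑ s', T s a s' = 1) (π : S → A) : polMatrix T π ∈ rowStochastic ℝ S :=
  mem_rowStochastic_iff_sum.2 ⟨fun s s' => hT0 s (π s) s', fun s => hT1 s (π s)⟩

lemma valueFn_eq_discountedOccupancy_mulVec (hT0 : ∀ s a s', 0 ≤ T s a s')
    (hT1 : ∀ s a, ∑ s', T s a s' = 1) (hγ0 : 0 ≤ γ) (hγ1 : γ < 1) (π : S → A) :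
    valueFn T r γ π = discountedOccupancy (polMatrix T π) γ *ᵥ fun s => r s (π s) := by
  have hP := polMatrix_mem_rowStochastic hT0 hT1 π
  funext s
  have hs (j : S) : Summable fun t : ℕ => γ ^ t * (polMatrix T π ^ t) s j :=
    Pi.summable.1 (Pi.summable.1 (summable_pow_smul_pow hP hγ0 hγ1) s) j
  simp only [valueFn, mulVec, dotProduct, discountedOccupancy_apply hP hγ0 hγ1,
    ← tsum_mul_right]
  rw [← Summable.tsum_finsetSum fun j _ => (hs j).mul_right _]
  simp only [Finset.mul_sum, mul_assoc]

lemma valueFn_bellman (hT0 : ∀ s a s', 0 ≤ T s a s') (hT1 : ∀ s a, ∑ s', T s a s' = 1)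
    (hγ0 : 0 ≤ γ) (hγ1 : γ < 1) (π : S → A) :
    (1 - γ • polMatrix T π) *ᵥ valueFn T r γ π = fun s => r s (π s) := by
  rw [valueFn_eq_discountedOccupancy_mulVec hT0 hT1 hγ0 hγ1, mulVec_mulVec,
    one_sub_smul_mul_discountedOccupancy (polMatrix_mem_rowStochastic hT0 hT1 π) hγ0 hγ1,
    one_mulVec]

lemma valueFn_nonneg (hT0 : ∀ s a s', 0 ≤ T s a s') (hT1 : ∀ s a, ∑ s', T s a s' = 1)
    (hr0 : ∀ s a, 0 ≤ r s a) (hγ0 : 0 ≤ γ) (hγ1 : γ < 1) (π : S → A) (s : S) :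
    0 ≤ valueFn T r γ π s := by
  rw [valueFn_eq_discountedOccupancy_mulVec hT0 hT1 hγ0 hγ1]
  exact dotProduct_nonneg_of_nonneg
    (discountedOccupancy_nonneg (polMatrix_mem_rowStochastic hT0 hT1 π) hγ0 hγ1 s)
    (fun s' => hr0 s' (π s'))

lemma valueFn_le (hT0 : ∀ s a s', 0 ≤ T s a s') (hT1 : ∀ s a, ∑ s', T s a s' = 1)
    (hr1 : ∀ s a, r s a ≤ 1) (hγ0 : 0 ≤ γ) (hγ1 : γ < 1) (π : S → A) (s : S) :
    valueFn T r γ π s ≤ (1 - γ)⁻¹ := by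
  have hP := polMatrix_mem_rowStochastic hT0 hT1 π
  have h := mulVec_mono_of_nonneg (discountedOccupancy_nonneg hP hγ0 hγ1)
    (show (fun s' => r s' (π s')) ≤ 1 from fun s' => hr1 s' (π s')) s
  rwa [discountedOccupancy_mulVec_one hP hγ0 hγ1,
    ← valueFn_eq_discountedOccupancy_mulVec hT0 hT1 hγ0 hγ1, Pi.smul_apply, Pi.one_apply,
    smul_eq_mul, mul_one] at h

lemma advantage_le [DecidableEq A] (hT0 : ∀ s a s', 0 ≤ T s a s')
    (hT1 : ∀ s a, ∑ s', T s a s' = 1) (hr0 : ∀ s a, 0 ≤ r s a) (hr1 : ∀ s a, r s a ≤ 1)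
    (hγ0 : 0 ≤ γ) (hγ1 : γ < 1) (πE π : S → A) (s : S) :
    r s (πE s) - ((1 - γ • polMatrix T πE) *ᵥ valueFn T r γ π) s
      ≤ (1 - γ)⁻¹ * if π s ≠ πE s then 1 else 0 := by
  by_cases h : π s = πE s
  · have hrow : (1 - γ • polMatrix T πE) s = (1 - γ • polMatrix T π) s := by
      ext j; simp [polMatrix, h]
    have hb := congrFun (valueFn_bellman (r := r) hT0 hT1 hγ0 hγ1 π) s
    have hsame : ((1 - γ • polMatrix T πE) *ᵥ valueFn T r γ π) s
        = ((1 - γ • polMatrix T π) *ᵥ valueFn T r γ π) s :=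
      congrArg (· ⬝ᵥ valueFn T r γ π) hrow
    simp [hsame, hb, h]
  · have hPV : (polMatrix T πE *ᵥ valueFn T r γ π) s ≤ (1 - γ)⁻¹ :=
      mulVec_le_of_mem_rowStochastic (polMatrix_mem_rowStochastic hT0 hT1 πE)
        (valueFn_le hT0 hT1 hr1 hγ0 hγ1 π) s
    have hV := valueFn_nonneg hT0 hT1 hr0 hγ0 hγ1 π s
    have hγPV := mul_le_mul_of_nonneg_left hPV hγ0
    have hgeom : 1 + γ * (1 - γ)⁻¹ = (1 - γ)⁻¹ := by
      field_simp [sub_ne_zero.2 hγ1.ne']; ring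
    simp only [sub_mulVec, one_mulVec, smul_mulVec, Pi.sub_apply, Pi.smul_apply, smul_eq_mul,
      if_pos h, mul_one]
    linarith [hr1 s (πE s)]

end MDP

theorem stmt_9_general {S A : Type*} [Fintype S] [DecidableEq S] [DecidableEq A]
    (T : S → A → S → ℝ) (hT0 : ∀ s a s', 0 ≤ T s a s') (hT1 : ∀ s a, ∑ s', T s a s' = 1)
    (r : S → A → ℝ) (hr0 : ∀ s a, 0 ≤ r s a) (hr1 : ∀ s a, r s a ≤ 1)
    (γ : ℝ) (hγ0 : 0 < γ) (hγ1 : γ < 1)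
    (πE π : S → A) (s : S) :
    valueFn T r γ πE s - valueFn T r γ π s
      ≤ 1 / (1 - γ) ^ 2 *
          ∑ s', ((1 - γ) * ∑' t : ℕ, γ ^ t * (polMatrix T πE ^ t) s s') *
            (if π s' ≠ πE s' then 1 else 0) := by
  have hPE := polMatrix_mem_rowStochastic hT0 hT1 πE
  set D := discountedOccupancy (polMatrix T πE) γ
  have hgap : valueFn T r γ πE - valueFn T r γ π
      = D *ᵥ ((fun s' => r s' (πE s')) - (1 - γ • polMatrix T πE) *ᵥ valueFn T r γ π) := by
    rw [discountedOccupancy_mulVec_sub hPE hγ0.le hγ1,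
      valueFn_eq_discountedOccupancy_mulVec hT0 hT1 hγ0.le hγ1 πE]
  calc valueFn T r γ πE s - valueFn T r γ π s
      ≤ (D *ᵥ fun s' => (1 - γ)⁻¹ * if π s' ≠ πE s' then 1 else 0) s := by
        rw [← Pi.sub_apply, hgap]
        exact mulVec_mono_of_nonneg (discountedOccupancy_nonneg hPE hγ0.le hγ1)
          (fun s' => advantage_le hT0 hT1 hr0 hr1 hγ0.le hγ1 πE π s') s
    _ = _ := by
        simp only [mulVec, dotProduct, D, discountedOccupancy_apply hPE hγ0.le hγ1,
          Finset.mul_sum]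
        refine Finset.sum_congr rfl fun s' _ => ?_
        field_simp [sub_ne_zero.2 hγ1.ne']

/-- In a finite discounted MDP with rewards in `[0,1]` and `γ ∈ (0,1)`, for
deterministic policies `π^E` and `π` and every start state `s`, the imitation gap
satisfies `V^{π^E}(s) − V^π(s) ≤ (1/(1−γ)²) Σ_{s'} d_s^{π^E}(s') 𝟙[π(s') ≠ π^E(s')]`,
where `d_s^{π^E}(s') = (1−γ) Σ_{t=0}^∞ γ^t (P_{π^E}^t)_{s,s'}`. -/
theorem stmt_9 {S A : Type*} [Fintype S] [Fintype A] [DecidableEq S] [DecidableEq A]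
    (T : S → A → S → ℝ) (hT0 : ∀ s a s', 0 ≤ T s a s') (hT1 : ∀ s a, ∑ s', T s a s' = 1)
    (r : S → A → ℝ) (hr0 : ∀ s a, 0 ≤ r s a) (hr1 : ∀ s a, r s a ≤ 1)
    (γ : ℝ) (hγ0 : 0 < γ) (hγ1 : γ < 1)
    (πE π : S → A) (s : S) :
    valueFn T r γ πE s - valueFn T r γ π s
      ≤ 1 / (1 - γ) ^ 2 *
          ∑ s', ((1 - γ) * ∑' t : ℕ, γ ^ t * (polMatrix T πE ^ t) s s') *
            (if π s' ≠ πE s' then 1 else 0) :=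
  stmt_9_general T hT0 hT1 r hr0 hr1 γ hγ0 hγ1 πE π s
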